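/- For every ℓ ≥ 4, the graph A_ℓ admits no semi-transitive orientation, and hence is not word-representable. -/

import Mathlib

def Alternate {V : Type*} [DecidableEq V] (x y : V) (w : List V) : Prop :=
  (w.filter fun z => decide (z = x ∨ z = y)).Chain' (· ≠ ·)

/-- `w` represents the graph `G`: every vertex occurs in `w`, and two distinct
vertices alternate in `w` iff they are adjacent in `G`. -/
def Represents {V : Type*} [DecidableEq V] (G : SimpleGraph V) (w : List V) : Prop :=
  (∀ v : V, v ∈ w) ∧ ∀ x y : V, x ≠ y → (G.Adj x y ↔ Alternate x y w)

def WordRepresentable {V : Type*} [DecidableEq V] (G : SimpleGraph V) : Prop :=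
  ∃ w : List V, Represents G w

/-- `R` is an orientation of `G`: `R` holds only on edges, and each edge gets
exactly one direction. -/
def IsOrientation {V : Type*} (G : SimpleGraph V) (R : V → V → Prop) : Prop :=
  (∀ x y, R x y → G.Adj x y) ∧ ∀ x y, G.Adj x y → (R x y ↔ ¬ R y x)

/-- `R` has no directed cycles. -/
def Acyclic {V : Type*} (R : V → V → Prop) : Prop :=
  ∀ v, ¬ Relation.TransGen R v v

/-- `R` is semi-transitive: acyclic, and every directed path `p 0 → ⋯ → p k`
whose endpoints are joined by the edge `p 0 → p k` is fully transitive. -/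
def SemiTransitive {V : Type*} (R : V → V → Prop) : Prop :=
  Acyclic R ∧
  ∀ (k : ℕ) (p : Fin (k + 1) → V),
    (∀ i : Fin k, R (p i.castSucc) (p i.succ)) →
    R (p 0) (p (Fin.last k)) →
    ∀ i j : Fin (k + 1), i < j → R (p i) (p j)

/-- The graph `A_ℓ` with `m = ℓ - 1` (zero-based): the graph `K^△_m`
(clique `inl i`, `i : Fin m`, plus vertices `inr (inl i)` adjacent exactly to
`inl i` and `inl ((i+1) mod m)`), together with an extra vertex `inr (inr ())`
(the vertex `ℓ` of the paper) adjacent exactly to all clique vertices. -/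
def AGraph (m : ℕ) : SimpleGraph (Fin m ⊕ (Fin m ⊕ Unit)) :=
  SimpleGraph.fromRel fun a b =>
    match a, b with
    | .inl i, .inl j => i ≠ j
    | .inl i, .inr (.inl j) => i.1 = j.1 ∨ i.1 = (j.1 + 1) % m
    | .inl _, .inr (.inr _) => True
    | _, _ => False

/-!
A semi-transitive orientation is transitive on a clique, so it ranks the clique
`B = {1, …, ℓ}` of `A_ℓ` as `0, 1, …, ℓ - 1`. If a vertex outside `B` sees exactly the two
vertices `x → y` of `B`, then `y` comes right after `x`, or `x` and `y` are the minimum and the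
maximum of `B`: in every other configuration some directed path through that vertex has a shortcut
edge, and semi-transitivity gives the vertex a third neighbour in `B`. So the ranks of
`1, …, ℓ - 1` form an injective map of the `(ℓ - 1)`-cycle into the `ℓ`-cycle
`0 – 1 – ⋯ – (ℓ - 1) – 0` avoiding the rank of `ℓ`, i.e. into a path, and a cycle of length at
least three has no injective map into a path with steps `±1`. Word-representability is reduced to
this by orienting every edge from the letter that occurs first: along a directed path the numbers
of occurrences in any prefix decrease, which makes the orientation semi-transitive.
-/

open Finset

section Orientation
variable {V : Type*} {R : V → V → Prop}

theorem Acyclic.irrefl (h : Acyclic R) (a : V) : ¬ R a a := fun h' => h a (.single h')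

theorem Acyclic.asymm (h : Acyclic R) {a b : V} (hab : R a b) : ¬ R b a :=
  fun hba => h a (.tail (.single hab) hba)

theorem Acyclic.not_cycle3 (h : Acyclic R) {a b c : V} (hab : R a b) (hbc : R b c) :
    ¬ R c a :=
  fun hca => h a (.tail (.tail (.single hab) hbc) hca)

theorem acyclic_of_lt (f : V → ℕ) (hf : ∀ x y, R x y → f x < f y) : Acyclic R := fun v hv => by
  have := Relation.TransGen.lift f hf v v hv
  rw [Relation.transGen_eq_self] at this
  exact lt_irrefl _ this

theorem SemiTransitive.shortcut (h : SemiTransitive R) {a b c d : V} (hab : R a b)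
    (hbc : R b c) (hcd : R c d) (had : R a d) : R a c ∧ R b d := by
  have hpath : ∀ i : Fin 3, R (![a, b, c, d] i.castSucc) (![a, b, c, d] i.succ) := by
    intro i; fin_cases i <;> assumption
  exact ⟨h.2 3 ![a, b, c, d] hpath had 0 2 (by decide),
    h.2 3 ![a, b, c, d] hpath had 1 3 (by decide)⟩

variable {G : SimpleGraph V}

theorem IsOrientation.total (hR : IsOrientation G R) {u v : V} (h : G.Adj u v) :
    R u v ∨ R v u :=
  or_iff_not_imp_right.2 (hR.2 u v h).2

theorem IsOrientation.trans_of_isClique (hR : IsOrientation G R) (hac : Acyclic R)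
    {s : Set V} (hs : G.IsClique s) {u v w : V} (hu : u ∈ s) (hw : w ∈ s)
    (huv : R u v) (hvw : R v w) : R u w := by
  have huw : u ≠ w := by rintro rfl; exact hac.asymm huv hvw
  exact (hR.total (hs hu hw huw)).resolve_right (hac.not_cycle3 huv hvw)

end Orientation

section Word
variable {V : Type*} [DecidableEq V]

def AlternatesFrom (x y : V) (w : List V) : Prop :=
  ∀ n, (w.take n).count y ≤ (w.take n).count x ∧ (w.take n).count x ≤ (w.take n).count y + 1

theorem alternatesFrom_cons {x y : V} (hxy : x ≠ y) (a : V) (w : List V) :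
    AlternatesFrom x y (a :: w) ↔
      if a = x then AlternatesFrom y x w else a ≠ y ∧ AlternatesFrom x y w := by
  have hsucc : AlternatesFrom x y (a :: w) ↔ ∀ n, (a :: w.take n).count y ≤
      (a :: w.take n).count x ∧ (a :: w.take n).count x ≤ (a :: w.take n).count y + 1 :=
    ⟨fun h n => h (n + 1), fun h n => n.casesOn (by simp) h⟩
  rw [hsucc]
  split_ifs with hax
  · subst hax
    simp only [List.count_cons_self, List.count_cons_of_ne hxy]
    exact ⟨fun h n => by have := h n; omega, fun h n => by have := h n; omega⟩
  · by_cases hay : a = y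
    · subst hay
      simp only [List.count_cons_self, List.count_cons_of_ne (Ne.symm hxy), ne_eq,
        not_true_eq_false, false_and, iff_false, not_forall]
      exact ⟨0, by simp⟩
    · simp only [List.count_cons_of_ne hax, List.count_cons_of_ne hay, ne_eq, hay,
        not_false_eq_true, true_and]
      rfl

theorem List.filter_eq_or_eq_comm (x y : V) (w : List V) :
    (w.filter fun z => decide (z = y ∨ z = x)) = w.filter fun z => decide (z = x ∨ z = y) :=
  List.filter_congr fun _ _ => by simp only [or_comm]

theorem alternatesFrom_iff_isChain {x y : V} (hxy : x ≠ y) (w : List V) :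
    AlternatesFrom x y w ↔ (y :: w.filter fun z => decide (z = x ∨ z = y)).IsChain (· ≠ ·) := by
  induction w generalizing x y with
  | nil => simp [AlternatesFrom]
  | cons a w ih =>
    rw [alternatesFrom_cons hxy]
    split_ifs with hax
    · subst hax
      rw [ih hxy.symm, List.filter_eq_or_eq_comm, List.filter_cons_of_pos (by simp),
        List.isChain_cons_cons]
      exact (and_iff_right hxy.symm).symm
    · by_cases hay : a = y
      · subst hay
        simp [List.filter_cons_of_pos]
      · rw [ih hxy, List.filter_cons_of_neg (by simp [hax, hay])]
        exact and_iff_right hay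

theorem alternate_iff_alternatesFrom {x y : V} (hxy : x ≠ y) (w : List V) :
    Alternate x y w ↔ AlternatesFrom x y w ∨ AlternatesFrom y x w := by
  rw [alternatesFrom_iff_isChain hxy, alternatesFrom_iff_isChain hxy.symm,
    List.filter_eq_or_eq_comm x y, Alternate, List.Chain']
  have hmem : ∀ z ∈ w.filter fun z => decide (z = x ∨ z = y), z = x ∨ z = y := by
    simp
  generalize w.filter (fun z => decide (z = x ∨ z = y)) = F at hmem ⊢
  cases F with
  | nil => simp
  | cons b F =>
    rcases hmem b List.mem_cons_self with rfl | rfl <;>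
      simp [List.isChain_cons_cons, hxy, hxy.symm]

theorem not_mem_of_alternatesFrom_of_alternatesFrom {x y : V} (hxy : x ≠ y) {w : List V}
    (hxy' : AlternatesFrom x y w) (hyx : AlternatesFrom y x w) : x ∉ w := by
  induction w with
  | nil => simp
  | cons a w ih =>
    rw [alternatesFrom_cons hxy] at hxy'
    rw [alternatesFrom_cons hxy.symm] at hyx
    by_cases hax : a = x
    · simp [hax, hxy] at hyx
    · by_cases hay : a = y
      · simp [hay, hxy.symm] at hxy'
      · simp only [hax, hay, if_false, ne_eq, not_false_eq_true, true_and] at hxy' hyx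
        simpa [Ne.symm hax] using ih hxy' hyx

theorem idxOf_lt_of_alternatesFrom {x y : V} (hxy : x ≠ y) {w : List V}
    (h : AlternatesFrom x y w) (hy : y ∈ w) : w.idxOf x < w.idxOf y := by
  induction w with
  | nil => simp at hy
  | cons a w ih =>
    rw [alternatesFrom_cons hxy] at h
    by_cases hax : a = x
    · subst hax
      simp [List.idxOf_cons_ne _ hxy]
    · have hay : a ≠ y := by simp_all
      simp only [hax, if_false] at h
      rw [List.idxOf_cons_ne _ hax, List.idxOf_cons_ne _ hay]
      exact Nat.succ_lt_succ (ih h.2 ((List.mem_cons.1 hy).resolve_left (Ne.symm hay)))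

theorem alternatesFrom_of_path {w : List V} {k : ℕ} (p : Fin (k + 1) → V)
    (hpath : ∀ i : Fin k, AlternatesFrom (p i.castSucc) (p i.succ) w)
    (hlast : AlternatesFrom (p 0) (p (Fin.last k)) w) {i j : Fin (k + 1)} (hij : i ≤ j) :
    AlternatesFrom (p i) (p j) w := by
  intro n
  have hanti : Antitone fun i => (w.take n).count (p i) :=
    Fin.antitone_iff_succ_le.2 fun i => (hpath i n).1
  have hji : (w.take n).count (p j) ≤ (w.take n).count (p i) := hanti hij
  have hi0 : (w.take n).count (p i) ≤ (w.take n).count (p 0) := hanti (Fin.zero_le i)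
  have hlj : (w.take n).count (p (Fin.last k)) ≤ (w.take n).count (p j) :=
    hanti (Fin.le_last j)
  exact ⟨hji, by have := (hlast n).2; omega⟩

theorem WordRepresentable.exists_semiTransitive {G : SimpleGraph V} (h : WordRepresentable G) :
    ∃ R, IsOrientation G R ∧ SemiTransitive R := by
  obtain ⟨w, hmem, hadj⟩ := h
  have hidx : ∀ x y, G.Adj x y ∧ AlternatesFrom x y w → w.idxOf x < w.idxOf y :=
    fun x y h => idxOf_lt_of_alternatesFrom h.1.ne h.2 (hmem y)
  refine ⟨fun x y => G.Adj x y ∧ AlternatesFrom x y w, ⟨fun x y h => h.1, ?_⟩,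
    acyclic_of_lt _ hidx, ?_⟩
  · intro x y hxy
    have hor := (alternate_iff_alternatesFrom hxy.ne w).1 ((hadj x y hxy.ne).1 hxy)
    simp only [hxy, hxy.symm, true_and]
    exact ⟨fun h h' => not_mem_of_alternatesFrom_of_alternatesFrom hxy.ne h h' (hmem x),
      hor.resolve_right⟩
  · intro k p hpath hlast i j hij
    have hmono : StrictMono fun i => w.idxOf (p i) :=
      Fin.strictMono_iff_lt_succ.2 fun i => hidx _ _ (hpath i)
    have hne : p i ≠ p j := fun h => (hmono hij).ne (congrArg w.idxOf h)
    have halt := alternatesFrom_of_path p (fun i => (hpath i).2) hlast.2 hij.le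
    exact ⟨(hadj _ _ hne).2 ((alternate_iff_alternatesFrom hne w).2 (Or.inl halt)), halt⟩

end Word

section Rank
variable {V : Type*} {G : SimpleGraph V} {R : V → V → Prop} {B : Finset V}

open Classical in
noncomputable def rankIn (R : V → V → Prop) (B : Finset V) (u : V) : ℕ := #{v ∈ B | R v u}

theorem rankIn_eq_zero_iff {x : V} : rankIn R B x = 0 ↔ ∀ u ∈ B, ¬ R u x := by
  classical
  simp [rankIn, Finset.filter_eq_empty_iff]

theorem rankIn_lt_card (hac : Acyclic R) {u : V} (hu : u ∈ B) : rankIn R B u < #B := by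
  classical
  refine Finset.card_lt_card ⟨Finset.filter_subset _ _, fun h => ?_⟩
  exact hac.irrefl u (Finset.mem_filter.1 (h hu)).2

variable (hR : IsOrientation G R) (hac : Acyclic R) (hB : G.IsClique (B : Set V))
include hR hac hB

theorem rankIn_lt_rankIn {u v : V} (hu : u ∈ B) (hv : v ∈ B) (huv : R u v) :
    rankIn R B u < rankIn R B v := by
  classical
  refine Finset.card_lt_card ⟨fun z hz => ?_, fun h => ?_⟩
  · rw [Finset.mem_filter] at hz ⊢
    exact ⟨hz.1, hR.trans_of_isClique hac hB hz.1 hv hz.2 huv⟩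
  · exact hac.irrefl u (Finset.mem_filter.1 (h (Finset.mem_filter.2 ⟨hu, huv⟩))).2

theorem rel_iff_rankIn_lt {u v : V} (hu : u ∈ B) (hv : v ∈ B) :
    R u v ↔ rankIn R B u < rankIn R B v := by
  refine ⟨rankIn_lt_rankIn hR hac hB hu hv, fun h => ?_⟩
  have huv : u ≠ v := by rintro rfl; exact lt_irrefl _ h
  exact (hR.total (hB hu hv huv)).resolve_right
    fun hvu => (rankIn_lt_rankIn hR hac hB hv hu hvu).not_gt h

theorem rankIn_injOn : Set.InjOn (rankIn R B) B := by
  intro u hu v hv h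
  by_contra huv
  rcases hR.total (hB hu hv huv) with huv' | hvu
  · exact (rankIn_lt_rankIn hR hac hB hu hv huv').ne h
  · exact (rankIn_lt_rankIn hR hac hB hv hu hvu).ne h.symm

theorem rankIn_add_one_eq_card {y : V} (hy : y ∈ B) (h : ∀ u ∈ B, ¬ R y u) :
    rankIn R B y + 1 = #B := by
  classical
  have hfilter : ({v ∈ B | R v y} : Finset V) = B.erase y := by
    ext u
    simp only [Finset.mem_filter, Finset.mem_erase]
    refine ⟨fun hu => ⟨fun huy => hac.irrefl u (huy ▸ hu.2), hu.1⟩, fun hu => ⟨hu.2, ?_⟩⟩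
    exact (hR.total (hB hu.2 hy hu.1)).resolve_right (h u hu.2)
  rw [rankIn, hfilter, Finset.card_erase_add_one hy]

theorem exists_between_of_rankIn_ne {x y : V} (hx : x ∈ B) (hy : y ∈ B) (hxy : R x y)
    (hne : rankIn R B y ≠ rankIn R B x + 1) : ∃ z ∈ B, R x z ∧ R z y := by
  have hlt := rankIn_lt_rankIn hR hac hB hx hy hxy
  have hsurj := Finset.surj_on_of_inj_on_of_card_le (s := B) (t := Finset.range #B)
    (fun u _ => rankIn R B u) (fun u hu => Finset.mem_range.2 (rankIn_lt_card hac hu))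
    (fun u v hu hv h => rankIn_injOn hR hac hB hu hv h) (by simp)
  obtain ⟨z, hz, hrz⟩ := hsurj (rankIn R B x + 1)
    (Finset.mem_range.2 (by have := rankIn_lt_card hac hy; omega))
  exact ⟨z, hz, (rel_iff_rankIn_lt hR hac hB hx hz).2 (by omega),
    (rel_iff_rankIn_lt hR hac hB hz hy).2 (by omega)⟩

end Rank

theorem Fin.not_injective_of_forall_add_one {n : ℕ} (h : Fin (n + 3) → ℕ)
    (hstep : ∀ j, h (j + 1) = h j + 1 ∨ h j = h (j + 1) + 1) : ¬ Function.Injective h := by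
  intro hinj
  obtain ⟨j, -, hj⟩ := Finset.univ.exists_min_image h Finset.univ_nonempty
  have hnext : h (j + 1) = h j + 1 := by
    have := hj (j + 1) (Finset.mem_univ _); have := hstep j; omega
  have hprev : h (j - 1) = h j + 1 := by
    have := hj (j - 1) (Finset.mem_univ _); have := hstep (j - 1)
    rw [sub_add_cancel] at this; omega
  have := hinj (hnext.trans hprev.symm)
  rw [eq_sub_iff_add_eq, add_assoc, add_eq_left, Fin.ext_iff] at this
  simp [Fin.val_add, Nat.mod_eq_of_lt (show 2 < n + 3 by omega)] at this

def CycleAdj (N a b : ℕ) : Prop := b = a + 1 ∨ a = b + 1 ∨ (a = 0 ∧ b = N) ∨ (a = N ∧ b = 0)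

theorem not_injective_of_forall_cycleAdj {n N p : ℕ} (r : Fin (n + 3) → ℕ) (hpN : p ≤ N)
    (hr : ∀ j, r j ≤ N ∧ r j ≠ p) (hstep : ∀ j, CycleAdj N (r j) (r (j + 1))) :
    ¬ Function.Injective r := by
  intro hinj
  -- `f` cuts the cycle `0 – 1 – ⋯ – N – 0` at `p` and lays it out as the path `0 – 1 – ⋯ – (N - 1)`
  set f : ℕ → ℕ := fun s => if s < p then s + N - p else s - p - 1 with hf
  refine Fin.not_injective_of_forall_add_one (f ∘ r) (fun j => ?_) fun i j hij => hinj ?_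
  · have := hr j; have := hr (j + 1); have := hstep j
    simp only [Function.comp, hf, CycleAdj] at *
    split_ifs <;> omega
  · have := hr i; have := hr j
    simp only [Function.comp, hf] at hij
    split_ifs at hij <;> omega

section Apex
variable {V : Type*} {G : SimpleGraph V} {R : V → V → Prop} {B : Finset V}
variable (hR : IsOrientation G R) (hST : SemiTransitive R) (hB : G.IsClique (B : Set V))
include hR hST hB

theorem rankIn_eq_succ_of_apex {x y A : V} (hx : x ∈ B) (hy : y ∈ B) (hxy : R x y)
    (hA : ∀ u ∈ B, G.Adj u A → u = x ∨ u = y)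
    (hsinkOrSource : R x A ∧ R y A ∨ R A x ∧ R A y) : rankIn R B y = rankIn R B x + 1 := by
  by_contra hne
  obtain ⟨z, hz, hxz, hzy⟩ := exists_between_of_rankIn_ne hR hST.1 hB hx hy hxy hne
  have hzA : G.Adj z A := by
    rcases hsinkOrSource with ⟨hxA, hyA⟩ | ⟨hAx, hAy⟩
    · exact hR.1 _ _ (hST.shortcut hxz hzy hyA hxA).2
    · exact (hR.1 _ _ (hST.shortcut hAx hxz hzy hAy).1).symm
  rcases hA z hz hzA with rfl | rfl
  · exact hST.1.irrefl _ hxz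
  · exact hST.1.irrefl _ hzy

theorem rankIn_eq_zero_of_apex {x y A : V} (hy : y ∈ B) (hxy : R x y)
    (hA : ∀ u ∈ B, G.Adj u A → u = x ∨ u = y) (hxA : R x A) (hAy : R A y) :
    rankIn R B x = 0 := by
  refine rankIn_eq_zero_iff.2 fun u hu hux => ?_
  have huy : R u y := hR.trans_of_isClique hST.1 hB hu hy hux hxy
  rcases hA u hu (hR.1 _ _ (hST.shortcut hux hxA hAy huy).1) with rfl | rfl
  · exact hST.1.irrefl _ hux
  · exact hST.1.asymm hxy hux

theorem rankIn_add_one_eq_card_of_apex {x y A : V} (hx : x ∈ B) (hy : y ∈ B) (hxy : R x y)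
    (hA : ∀ u ∈ B, G.Adj u A → u = x ∨ u = y) (hxA : R x A) (hAy : R A y) :
    rankIn R B y + 1 = #B := by
  refine rankIn_add_one_eq_card hR hST.1 hB hy fun u hu hyu => ?_
  have hxu : R x u := hR.trans_of_isClique hST.1 hB hx hu hxy hyu
  rcases hA u hu (hR.1 _ _ (hST.shortcut hxA hAy hyu hxu).2).symm with rfl | rfl
  · exact hST.1.asymm hxy hyu
  · exact hST.1.irrefl _ hyu

theorem rankIn_of_apex {x y A : V} (hx : x ∈ B) (hy : y ∈ B) (hxy : R x y)
    (hxA : G.Adj x A) (hyA : G.Adj y A) (hA : ∀ u ∈ B, G.Adj u A → u = x ∨ u = y) :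
    rankIn R B y = rankIn R B x + 1 ∨ (rankIn R B x = 0 ∧ rankIn R B y + 1 = #B) := by
  rcases hR.total hxA with hxA' | hAx <;> rcases hR.total hyA with hyA' | hAy
  · exact .inl (rankIn_eq_succ_of_apex hR hST hB hx hy hxy hA (.inl ⟨hxA', hyA'⟩))
  · exact .inr ⟨rankIn_eq_zero_of_apex hR hST hB hy hxy hA hxA' hAy,
      rankIn_add_one_eq_card_of_apex hR hST hB hx hy hxy hA hxA' hAy⟩
  · exact (hST.1.not_cycle3 hxy hyA' hAx).elim
  · exact .inl (rankIn_eq_succ_of_apex hR hST hB hx hy hxy hA (.inr ⟨hAx, hAy⟩))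

theorem cycleAdj_rankIn_of_apex {x y A : V} (hx : x ∈ B) (hy : y ∈ B) (hxy : x ≠ y)
    (hxA : G.Adj x A) (hyA : G.Adj y A) (hA : ∀ u ∈ B, G.Adj u A → u = x ∨ u = y) :
    CycleAdj (#B - 1) (rankIn R B x) (rankIn R B y) := by
  have hxB := rankIn_lt_card hST.1 hx
  have hyB := rankIn_lt_card hST.1 hy
  unfold CycleAdj
  rcases hR.total (hB hx hy hxy) with h | h
  · have := rankIn_of_apex hR hST hB hx hy h hxA hyA hA
    omega
  · have := rankIn_of_apex hR hST hB hy hx h hyA hxA fun u hu hu' => (hA u hu hu').symm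
    omega

end Apex

section AGraph
variable {m : ℕ}

def aGraphClique (m : ℕ) : Finset (Fin m ⊕ (Fin m ⊕ Unit)) :=
  insert (.inr (.inr ())) (Finset.univ.map .inl)

theorem card_aGraphClique : #(aGraphClique m) = m + 1 := by
  rw [aGraphClique, Finset.card_insert_of_notMem (by simp)]
  simp

theorem isClique_aGraphClique : (AGraph m).IsClique (aGraphClique m : Set _) := by
  intro u hu v hv huv
  simp only [aGraphClique, Finset.coe_insert, Finset.coe_map, Set.mem_insert_iff,
    Set.mem_image, Finset.coe_univ, Set.mem_univ, true_and] at hu hv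
  rcases hu with rfl | ⟨i, rfl⟩ <;> rcases hv with rfl | ⟨j, rfl⟩ <;>
    simp_all [AGraph, SimpleGraph.fromRel_adj]

theorem aGraph_adj_apex [NeZero m] {u : Fin m ⊕ (Fin m ⊕ Unit)} {j : Fin m} :
    (AGraph m).Adj u (.inr (.inl j)) ↔ u = .inl j ∨ u = .inl (j + 1) := by
  rcases u with i | _ | _ <;> simp [AGraph, SimpleGraph.fromRel_adj, Fin.ext_iff, Fin.val_add]

theorem aGraph_not_semiTransitive (n : ℕ) :
    ¬ ∃ R, IsOrientation (AGraph (n + 3)) R ∧ SemiTransitive R := by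
  rintro ⟨R, hR, hST⟩
  set B := aGraphClique (n + 3)
  have hB : (AGraph (n + 3)).IsClique (B : Set _) := isClique_aGraphClique
  have hcard : #B - 1 = n + 3 := by simp [B, card_aGraphClique]
  have hinl (j : Fin (n + 3)) : Sum.inl j ∈ B := by simp [B, aGraphClique]
  have hhub : Sum.inr (Sum.inr ()) ∈ B := by simp [B, aGraphClique]
  have hrank_le (u) (hu : u ∈ B) : rankIn R B u ≤ n + 3 := by
    have := rankIn_lt_card hST.1 hu; omega
  refine not_injective_of_forall_cycleAdj (fun j => rankIn R B (.inl j))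
    (hrank_le _ hhub) (fun j => ⟨hrank_le _ (hinl j), fun h => ?_⟩) (fun j => ?_) ?_
  · exact Sum.inl_ne_inr (rankIn_injOn hR hST.1 hB (hinl j) hhub h)
  · have := cycleAdj_rankIn_of_apex hR hST hB (hinl j) (hinl (j + 1)) (by simp)
      (aGraph_adj_apex.2 (.inl rfl)) (aGraph_adj_apex.2 (.inr rfl))
      fun u _ hu => aGraph_adj_apex.1 hu
    rwa [hcard] at this
  · exact fun i j h => Sum.inl_injective (rankIn_injOn hR hST.1 hB (hinl i) (hinl j) h)

end AGraph

/-- For every `ℓ ≥ 4`, the graph `A_ℓ` admits no semi-transitive orientation,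
and hence is not word-representable. -/
theorem aGraph_not_wordRepresentable (ℓ : ℕ) (hℓ : 4 ≤ ℓ) :
    (¬ ∃ R, IsOrientation (AGraph (ℓ - 1)) R ∧ SemiTransitive R) ∧
    ¬ WordRepresentable (AGraph (ℓ - 1)) := by
  obtain ⟨n, hn⟩ : ∃ n, ℓ - 1 = n + 3 := ⟨ℓ - 4, by omega⟩
  rw [hn]
  exact ⟨aGraph_not_semiTransitive n, fun h => aGraph_not_semiTransitive n h.exists_semiTransitive⟩
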